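/- arXiv:2408.05723 — 2 statements merged into one kernel-verified Lean document; each statement's English description precedes it below -/
import Mathlib

section
/- Let v₁, …, v_N ∈ ℂ^d, c > 0, and s > 0. Consider the class H of functions on {v₁, …, v_N} of the form h(v) = Re(w^H · D_λ · v) where w ∈ ℂ^d with ‖w‖₂ ≤ c and D_λ = diag(exp(sλ₁), …, exp(sλ_d)) with λ ∈ ℝ^d, |λⱼ| ≤ c for all j. Then the empirical Rademacher complexity satisfies R_S(H) = (1/N)·E_σ[ sup_{h∈H} Σ_{i=1}^N σᵢ h(vᵢ) ] = (c/N)·exp(cs)·E_σ[ ‖Σ_{i=1}^N σᵢ vᵢ‖₂ ], where σ₁, …, σ_N are i.i.d. Rademacher random variables. -/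
open scoped ComplexConjugate

/-- The sign `±1` associated with a Boolean (a Rademacher value). -/
noncomputable def rsign (b : Bool) : ℝ := if b then 1 else -1

/-- Empirical Rademacher complexity of a class `H` of real-valued functions on a sample
`v₁, …, v_N`: `R_S(H) = (1/N) E_σ [sup_{h ∈ H} ∑ i, σᵢ h(vᵢ)]`, where the expectation is
over i.i.d. uniform signs `σᵢ ∈ {±1}`. -/
noncomputable def radComplexity {X : Type*} (N : ℕ) (H : Set (X → ℝ)) (v : Fin N → X) : ℝ :=
  (∑ b : Fin N → Bool, sSup ((fun h : X → ℝ => ∑ i, rsign (b i) * h (v i)) '' H)) / 2 ^ N / N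

/-- The class of functions `v ↦ Re(wᴴ D_λ v)` with `‖w‖₂ ≤ c` and
`D_λ = diag(exp(sλ₁), …, exp(sλ_d))`, `|λⱼ| ≤ c`. -/
noncomputable def Hclass (d : ℕ) (c s : ℝ) : Set (EuclideanSpace ℂ (Fin d) → ℝ) :=
  { h | ∃ w : EuclideanSpace ℂ (Fin d), ‖w‖ ≤ c ∧ ∃ lam : Fin d → ℝ,
      (∀ j, |lam j| ≤ c) ∧
      h = fun v => (∑ j, conj (w j) * (Real.exp (s * lam j) : ℂ) * v j).re }

/-!
For `s ≥ 0` the effective weight vectors `D_λ w` fill exactly the closed ball of radius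
`c·exp(cs)`: `exp(sλⱼ) ≤ exp(cs)` bounds them, and `λ ≡ c`, `w = exp(-cs)·w'` reaches
every `w'` in it. So `H` is the class of `v ↦ Re⟪w', v⟫` over that ball. Each such map is
`ℝ`-linear, hence `∑ σᵢ h(vᵢ) = h(∑ σᵢ vᵢ)`, and by Cauchy–Schwarz the supremum of
`Re⟪w', u⟫` over the ball of radius `r` is `r‖u‖`, attained at `w' = (r/‖u‖)·u`.
-/
open scoped InnerProductSpace
open Metric

section ComplexInnerProductSpace

variable {E : Type*} [NormedAddCommGroup E] [InnerProductSpace ℂ E]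

lemma sum_mul_re_inner {ι : Type*} [Fintype ι] (a : ι → ℝ) (w : E) (x : ι → E) :
    ∑ i, a i * (⟪w, x i⟫_ℂ).re = (⟪w, ∑ i, a i • x i⟫_ℂ).re := by
  simp only [← Complex.coe_smul, inner_sum, inner_smul_right, Complex.re_sum,
    Complex.re_ofReal_mul]

lemma isGreatest_re_inner_closedBall {r : ℝ} (hr : 0 ≤ r) (u : E) :
    IsGreatest ((fun w => (⟪w, u⟫_ℂ).re) '' closedBall 0 r) (r * ‖u‖) := by
  refine ⟨?_, ?_⟩
  · rcases eq_or_ne u 0 with rfl | hu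
    · exact ⟨0, by simpa using hr, by simp⟩
    have hu' : 0 < ‖u‖ := norm_pos_iff.2 hu
    refine ⟨(r / ‖u‖) • u, ?_, ?_⟩
    · rw [mem_closedBall_zero_iff, norm_smul, Real.norm_of_nonneg (by positivity),
        div_mul_cancel₀ _ hu'.ne']
    · dsimp only
      rw [← Complex.coe_smul, inner_smul_left, Complex.conj_ofReal, Complex.re_ofReal_mul,
        ← RCLike.re_to_complex, inner_self_eq_norm_sq]
      field_simp
  · rintro _ ⟨w, hw, rfl⟩
    calc (⟪w, u⟫_ℂ).re ≤ ‖w‖ * ‖u‖ := re_inner_le_norm (𝕜 := ℂ) w u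
      _ ≤ r * ‖u‖ := by gcongr; simpa using hw

theorem radComplexity_re_inner_closedBall {N : ℕ} {r : ℝ} (hr : 0 ≤ r) (v : Fin N → E) :
    radComplexity N ((fun w x => (⟪w, x⟫_ℂ).re) '' closedBall (0 : E) r) v
      = r / N * ((∑ b : Fin N → Bool, ‖∑ i, rsign (b i) • v i‖) / 2 ^ N) := by
  have hsup (b : Fin N → Bool) :
      sSup ((fun h : E → ℝ => ∑ i, rsign (b i) * h (v i)) ''
        ((fun w x => (⟪w, x⟫_ℂ).re) '' closedBall 0 r)) = r * ‖∑ i, rsign (b i) • v i‖ := by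
    rw [Set.image_image]
    simp_rw [sum_mul_re_inner]
    exact (isGreatest_re_inner_closedBall hr _).csSup_eq
  simp only [radComplexity, hsup, ← Finset.mul_sum]
  ring

end ComplexInnerProductSpace

lemma norm_toLp_mul_le {ι : Type*} [Fintype ι] {a : ι → ℂ} {M : ℝ} (hM : 0 ≤ M)
    (ha : ∀ j, ‖a j‖ ≤ M) (w : EuclideanSpace ℂ ι) :
    ‖WithLp.toLp 2 (fun j => a j * w j)‖ ≤ M * ‖w‖ := by
  refine le_of_sq_le_sq ?_ (by positivity)
  rw [EuclideanSpace.norm_sq_eq, mul_pow, EuclideanSpace.norm_sq_eq, Finset.mul_sum]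
  gcongr with j
  simp only [norm_mul, mul_pow]
  gcongr
  exact ha j

lemma inner_euclideanSpace_eq {ι : Type*} [Fintype ι] (x y : EuclideanSpace ℂ ι) :
    ⟪x, y⟫_ℂ = ∑ j, conj (x j) * y j := by
  simp [EuclideanSpace.inner_eq_star_dotProduct, dotProduct, mul_comm]

theorem Hclass_eq_image_closedBall {d : ℕ} {c s : ℝ} (hs : 0 ≤ s) :
    Hclass d c s = (fun w x => (⟪w, x⟫_ℂ).re) '' closedBall 0 (c * Real.exp (c * s)) := by
  ext h
  constructor
  · rintro ⟨w, hw, lam, hlam, rfl⟩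
    refine ⟨WithLp.toLp 2 (fun j => (Real.exp (s * lam j) : ℂ) * w j), ?_, ?_⟩
    · rw [mem_closedBall_zero_iff, mul_comm c]
      refine (norm_toLp_mul_le (Real.exp_pos _).le (fun j => ?_) w).trans (by gcongr)
      rw [Complex.norm_real, Real.norm_of_nonneg (Real.exp_pos _).le, Real.exp_le_exp, mul_comm c]
      exact mul_le_mul_of_nonneg_left (abs_le.1 (hlam j)).2 hs
    · funext x
      simp only [inner_euclideanSpace_eq, map_mul, Complex.conj_ofReal]
      congr 1
      exact Finset.sum_congr rfl fun j _ => by ring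
  · rintro ⟨w, hw, rfl⟩
    rw [mem_closedBall_zero_iff] at hw
    have hc : 0 ≤ c := nonneg_of_mul_nonneg_left ((norm_nonneg w).trans hw) (Real.exp_pos _)
    refine ⟨Real.exp (-(c * s)) • w, ?_, fun _ => c, fun _ => (abs_of_nonneg hc).le, ?_⟩
    · rw [norm_smul, Real.norm_of_nonneg (Real.exp_pos _).le, Real.exp_neg]
      rwa [inv_mul_le_iff₀ (Real.exp_pos _), mul_comm]
    · funext x
      simp only [inner_euclideanSpace_eq, PiLp.smul_apply, Complex.real_smul, map_mul,
        Complex.conj_ofReal]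
      congr 1
      refine Finset.sum_congr rfl fun j _ => ?_
      have hexp : (Real.exp (-(c * s)) : ℂ) * Real.exp (c * s) = 1 := by
        rw [← Complex.ofReal_mul, ← Real.exp_add, neg_add_cancel, Real.exp_zero, Complex.ofReal_one]
      rw [mul_comm s c]
      linear_combination (-(conj (w j) * x j)) * hexp

theorem radComplexity_Hclass_eq_general (d N : ℕ)
    (v : Fin N → EuclideanSpace ℂ (Fin d)) (c s : ℝ) (hc : 0 < c) (hs : 0 < s) :
    radComplexity N (Hclass d c s) v
      = c / N * Real.exp (c * s) *
          ((∑ b : Fin N → Bool, ‖∑ i, rsign (b i) • v i‖) / 2 ^ N) := by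
  rw [Hclass_eq_image_closedBall hs.le,
    radComplexity_re_inner_closedBall (by positivity)]
  ring

/-- Closed form of the empirical Rademacher complexity of the class `Hclass`:
`R_S(H) = (c/N) exp(cs) E_σ[‖∑ i, σᵢ vᵢ‖₂]`. -/
theorem radComplexity_Hclass_eq (d N : ℕ) (hN : 0 < N)
    (v : Fin N → EuclideanSpace ℂ (Fin d)) (c s : ℝ) (hc : 0 < c) (hs : 0 < s) :
    radComplexity N (Hclass d c s) v
      = c / N * Real.exp (c * s) *
          ((∑ b : Fin N → Bool, ‖∑ i, rsign (b i) • v i‖) / 2 ^ N) :=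
  radComplexity_Hclass_eq_general d N v c s hc hs
end

section
/- Let x₁, …, x_N ∈ ℂ^d, c > 0, T > 0, γ > 0, and 0 < p < 1. Define the function classes F̂ = { v ↦ Re(w^H D_λ v) : ‖w‖₂ ≤ c, λ ∈ ℝ^d with |λⱼ| ≤ c } and Ĝ = { v ↦ exp(−p(1−p)γ²T/2) · Re(w^H D_λ v) : ‖w‖₂ ≤ c, λ ∈ ℝ^d with |λⱼ| ≤ c }, where D_λ = diag(exp(Tpλ₁), …, exp(Tpλ_d)). Then the empirical Rademacher complexities over the sample S = {x₁, …, x_N} satisfy R_S(F̂) = (c/N)·exp(cTp)·E_σ[‖Σᵢ σᵢ xᵢ‖₂], R_S(Ĝ) = exp(−p(1−p)γ²T/2)·R_S(F̂), and consequently R_S(Ĝ) < R_S(F̂) whenever E_σ[‖Σᵢ σᵢ xᵢ‖₂] > 0. -/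
open scoped ComplexConjugate

/-- The class `F̂` of functions `v ↦ Re(wᴴ D_λ v)` with `‖w‖₂ ≤ c`,
`D_λ = diag(exp(Tpλ₁), …, exp(Tpλ_d))`, `|λⱼ| ≤ c` (deterministic ODE model). -/
noncomputable def Fhat (d : ℕ) (c T p : ℝ) : Set (EuclideanSpace ℂ (Fin d) → ℝ) :=
  { h | ∃ w : EuclideanSpace ℂ (Fin d), ‖w‖ ≤ c ∧ ∃ lam : Fin d → ℝ,
      (∀ j, |lam j| ≤ c) ∧
      h = fun v => (∑ j, conj (w j) * (Real.exp (T * p * lam j) : ℂ) * v j).re }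

/-- The class `Ĝ` obtained from `F̂` by the multiplicative damping factor
`exp(−p(1−p)γ²T/2)` coming from the stochastic (SDE) model. -/
noncomputable def Ghat (d : ℕ) (c T p γ : ℝ) : Set (EuclideanSpace ℂ (Fin d) → ℝ) :=
  { h | ∃ w : EuclideanSpace ℂ (Fin d), ‖w‖ ≤ c ∧ ∃ lam : Fin d → ℝ,
      (∀ j, |lam j| ≤ c) ∧
      h = fun v => Real.exp (-(p * (1 - p) * γ ^ 2 * T / 2)) *
        (∑ j, conj (w j) * (Real.exp (T * p * lam j) : ℂ) * v j).re }

/-! Every `h ∈ F̂` is the ℝ-linear functional `v ↦ Re ⟪D_λ w, v⟫`, so the Rademacher correlation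
`∑ σᵢ h(xᵢ)` equals `h(∑ σᵢ xᵢ)`. By Cauchy–Schwarz and `‖D_λ‖ ≤ exp(cTp)` its supremum over `F̂`
is `c·exp(cTp)·‖∑ σᵢ xᵢ‖`, attained at `λ ≡ c` and `w` a multiple of `∑ σᵢ xᵢ`. The class `Ĝ` is
the dilate of `F̂` by the damping factor `exp(−p(1−p)γ²T/2) ∈ (0, 1)`, and suprema commute with
nonnegative dilations. -/

open scoped Pointwise

theorem sum_mul_re_inner_s15 {𝕜 E ι : Type*} [RCLike 𝕜] [NormedAddCommGroup E] [InnerProductSpace 𝕜 E]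
    [Module ℝ E] [IsScalarTower ℝ 𝕜 E] (s : Finset ι) (a : E) (r : ι → ℝ) (x : ι → E) :
    ∑ i ∈ s, r i * RCLike.re (inner 𝕜 a (x i)) = RCLike.re (inner 𝕜 a (∑ i ∈ s, r i • x i)) := by
  rw [inner_sum, map_sum]
  refine Finset.sum_congr rfl fun i _ => ?_
  rw [RCLike.real_smul_eq_coe_smul (K := 𝕜), inner_smul_real_right, RCLike.smul_re]

section DiagonalScaling

variable {ι : Type*}

/-- `D_λ w`. As `D_λ` is real diagonal, `wᴴ D_λ v = ⟪D_λ w, v⟫`. -/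
noncomputable def diagSmul (e : ι → ℝ) (w : EuclideanSpace ℂ ι) : EuclideanSpace ℂ ι :=
  WithLp.toLp 2 fun j => (e j : ℂ) * w j

theorem norm_diagSmul_le [Fintype ι] {e : ι → ℝ} {M : ℝ} (hM : 0 ≤ M) (he : ∀ j, |e j| ≤ M)
    (w : EuclideanSpace ℂ ι) : ‖diagSmul e w‖ ≤ M * ‖w‖ := by
  refine le_of_sq_le_sq ?_ (by positivity)
  rw [mul_pow, EuclideanSpace.norm_sq_eq, EuclideanSpace.norm_sq_eq, Finset.mul_sum]
  gcongr with j
  simp only [diagSmul, PiLp.toLp_apply, norm_mul, Complex.norm_real, Real.norm_eq_abs, mul_pow]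
  gcongr
  exact he j

theorem diagSmul_const (a : ℝ) (w : EuclideanSpace ℂ ι) : diagSmul (fun _ => a) w = a • w := by
  ext j
  simp [diagSmul, Complex.real_smul]

theorem sum_conj_mul_mul_eq_inner_diagSmul [Fintype ι] (e : ι → ℝ) (w v : EuclideanSpace ℂ ι) :
    ∑ j, conj (w j) * (e j : ℂ) * v j = inner ℂ (diagSmul e w) v := by
  simp only [PiLp.inner_apply, RCLike.inner_apply', diagSmul, map_mul, Complex.conj_ofReal]
  exact Finset.sum_congr rfl fun j _ => by ring

end DiagonalScaling

section Fhat

variable {d : ℕ} {c T p : ℝ}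

theorem sum_mul_apply_of_mem_Fhat {h : EuclideanSpace ℂ (Fin d) → ℝ} (hh : h ∈ Fhat d c T p)
    {N : ℕ} (s : Fin N → ℝ) (x : Fin N → EuclideanSpace ℂ (Fin d)) :
    ∑ i, s i * h (x i) = h (∑ i, s i • x i) := by
  obtain ⟨w, -, lam, -, rfl⟩ := hh
  simp only [sum_conj_mul_mul_eq_inner_diagSmul]
  exact sum_mul_re_inner_s15 (𝕜 := ℂ) _ _ s x

theorem isGreatest_eval_Fhat (hc : 0 ≤ c) (hTp : 0 ≤ T * p) (u : EuclideanSpace ℂ (Fin d)) :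
    IsGreatest ((fun h => h u) '' Fhat d c T p) (c * Real.exp (c * T * p) * ‖u‖) := by
  constructor
  · refine ⟨_, ⟨(c / ‖u‖) • u, ?_, fun _ => c, fun _ => (abs_of_nonneg hc).le, rfl⟩, ?_⟩
    · rw [norm_smul, Real.norm_of_nonneg (by positivity)]
      rcases eq_or_ne ‖u‖ 0 with hu | hu
      · simpa [hu] using hc
      · rw [div_mul_cancel₀ _ hu]
    · simp only [sum_conj_mul_mul_eq_inner_diagSmul, diagSmul_const, smul_smul]
      rw [RCLike.real_smul_eq_coe_smul (K := ℂ), inner_smul_real_left, Complex.smul_re,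
        smul_eq_mul, show (inner ℂ u u).re = ‖u‖ ^ 2 from inner_self_eq_norm_sq (𝕜 := ℂ) u]
      rcases eq_or_ne ‖u‖ 0 with hu | hu
      · simp [hu]
      · field_simp
  · rintro _ ⟨_, ⟨w, hw, lam, hlam, rfl⟩, rfl⟩
    have hD : ∀ j, |Real.exp (T * p * lam j)| ≤ Real.exp (c * T * p) := fun j => by
      rw [abs_of_pos (Real.exp_pos _), Real.exp_le_exp]
      exact (mul_le_mul_of_nonneg_left (abs_le.mp (hlam j)).2 hTp).trans_eq (by ring)
    calc (∑ j, conj (w j) * (Real.exp (T * p * lam j) : ℂ) * u j).re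
        = RCLike.re (inner ℂ (diagSmul (fun j => Real.exp (T * p * lam j)) w) u) := by
          rw [sum_conj_mul_mul_eq_inner_diagSmul]; rfl
      _ ≤ ‖diagSmul (fun j => Real.exp (T * p * lam j)) w‖ * ‖u‖ := re_inner_le_norm _ _
      _ ≤ Real.exp (c * T * p) * c * ‖u‖ := by
          gcongr
          exact (norm_diagSmul_le (Real.exp_pos _).le hD w).trans (by gcongr)
      _ = c * Real.exp (c * T * p) * ‖u‖ := by ring

theorem sSup_correlation_Fhat (hc : 0 ≤ c) (hTp : 0 ≤ T * p) {N : ℕ} (s : Fin N → ℝ)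
    (x : Fin N → EuclideanSpace ℂ (Fin d)) :
    sSup ((fun h => ∑ i, s i * h (x i)) '' Fhat d c T p)
      = c * Real.exp (c * T * p) * ‖∑ i, s i • x i‖ := by
  rw [Set.image_congr fun h hh => sum_mul_apply_of_mem_Fhat hh s x]
  exact (isGreatest_eval_Fhat hc hTp _).csSup_eq

theorem radComplexity_Fhat (hc : 0 ≤ c) (hTp : 0 ≤ T * p) {N : ℕ}
    (x : Fin N → EuclideanSpace ℂ (Fin d)) :
    radComplexity N (Fhat d c T p) x
      = c / N * Real.exp (c * T * p) *
          ((∑ b : Fin N → Bool, ‖∑ i, rsign (b i) • x i‖) / 2 ^ N) := by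
  simp only [radComplexity, sSup_correlation_Fhat hc hTp, ← Finset.mul_sum]
  ring

theorem Ghat_eq_smul_Fhat (γ : ℝ) :
    Ghat d c T p γ = Real.exp (-(p * (1 - p) * γ ^ 2 * T / 2)) • Fhat d c T p := by
  rw [← Set.image_smul]
  ext h
  simp only [Ghat, Fhat, Set.mem_ofPred_eq, Set.mem_image]
  constructor
  · rintro ⟨w, hw, lam, hlam, rfl⟩
    exact ⟨_, ⟨w, hw, lam, hlam, rfl⟩, rfl⟩
  · rintro ⟨_, ⟨w, hw, lam, hlam, rfl⟩, rfl⟩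
    exact ⟨w, hw, lam, hlam, rfl⟩

end Fhat

theorem radComplexity_smul {X : Type*} {a : ℝ} (ha : 0 ≤ a) (N : ℕ) (H : Set (X → ℝ))
    (v : Fin N → X) : radComplexity N (a • H) v = a * radComplexity N H v := by
  have hcorr (b : Fin N → Bool) : (fun h : X → ℝ => ∑ i, rsign (b i) * h (v i)) '' (a • H)
      = a • (fun h : X → ℝ => ∑ i, rsign (b i) * h (v i)) '' H := by
    simp only [← Set.image_smul, Set.image_image, Pi.smul_apply, smul_eq_mul, Finset.mul_sum,
      mul_left_comm a]
  simp only [radComplexity, hcorr, Real.sSup_smul_of_nonneg ha, smul_eq_mul, ← Finset.mul_sum,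
    mul_div_assoc]

theorem exp_neg_damping_lt_one {T p γ : ℝ} (hT : 0 < T) (hγ : γ ≠ 0) (hp : 0 < p) (hp1 : p < 1) :
    Real.exp (-(p * (1 - p) * γ ^ 2 * T / 2)) < 1 := by
  have : 0 < 1 - p := sub_pos.mpr hp1
  rw [Real.exp_lt_one_iff, neg_lt_zero]
  positivity

/-- Theorem 3 of the paper in reduced closed form: the Rademacher complexity of the
stochastically perturbed class `Ĝ` is the damping factor `exp(−p(1−p)γ²T/2)` times that of
the deterministic class `F̂`, hence strictly smaller whenever `E_σ[‖∑ σᵢ xᵢ‖₂] > 0`. -/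
theorem radComplexity_Ghat_lt_Fhat (d N : ℕ) (hN : 0 < N)
    (x : Fin N → EuclideanSpace ℂ (Fin d)) (c T γ p : ℝ)
    (hc : 0 < c) (hT : 0 < T) (hγ : 0 < γ) (hp : 0 < p) (hp1 : p < 1) :
    radComplexity N (Fhat d c T p) x
        = c / N * Real.exp (c * T * p) *
            ((∑ b : Fin N → Bool, ‖∑ i, rsign (b i) • x i‖) / 2 ^ N) ∧
    radComplexity N (Ghat d c T p γ) x
        = Real.exp (-(p * (1 - p) * γ ^ 2 * T / 2)) * radComplexity N (Fhat d c T p) x ∧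
    ((∑ b : Fin N → Bool, ‖∑ i, rsign (b i) • x i‖) / 2 ^ N > 0 →
      radComplexity N (Ghat d c T p γ) x < radComplexity N (Fhat d c T p) x) := by
  have hTp : 0 ≤ T * p := by positivity
  have hRF := radComplexity_Fhat hc.le hTp x
  have hRG : radComplexity N (Ghat d c T p γ) x
      = Real.exp (-(p * (1 - p) * γ ^ 2 * T / 2)) * radComplexity N (Fhat d c T p) x := by
    rw [Ghat_eq_smul_Fhat, radComplexity_smul (Real.exp_pos _).le]
  refine ⟨hRF, hRG, fun hmean => ?_⟩
  have hRF_pos : 0 < radComplexity N (Fhat d c T p) x := by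
    rw [hRF]
    have : (0 : ℝ) < N := Nat.cast_pos.mpr hN
    positivity
  rw [hRG]
  exact mul_lt_of_lt_one_left hRF_pos (exp_neg_damping_lt_one hT hγ.ne' hp hp1)
end
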